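/- Let A be an n×N complex matrix, B an N×N complex matrix, D an n×n complex matrix, f ∈ ℂⁿ, g ∈ ℂᴺ with A·B − Dᵀ·A = f·gᵀ, and let F be an l×n and C an l×N complex matrix with det(F·A·Cᵀ) ≠ 0. For z ∈ ℂ with Dᵀ − z·I_n invertible and any w ∈ ℂ with Dᵀ − w·I_n invertible, define ξ(z,w) := (z − w) · det(F·(Dᵀ − z·I_n)⁻¹·(Dᵀ − w·I_n)⁻¹·A·(B − z·I_N)·(B − w·I_N)·Cᵀ). Then for all z₁, z₂, z₃, z₄ ∈ ℂ such that Dᵀ − z_i·I_n is invertible for i = 1,2,3,4, the Plücker relation ξ(z₁,z₂)·ξ(z₃,z₄) − ξ(z₁,z₃)·ξ(z₂,z₄) + ξ(z₁,z₄)·ξ(z₂,z₃) = 0 holds. -/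

import Mathlib

/-!
The displacement equation `A B - Dᵀ A = f gᵀ` gives `(Dᵀ - t)⁻¹ A (B - t) = A + (Dᵀ - t)⁻¹ f gᵀ`,
so the matrix inside `ξ(z, w)` is a rank-two perturbation of `T = F A Cᵀ`. The matrix
determinant lemma and the resolvent identity
`(z - w) (Dᵀ - z)⁻¹ (Dᵀ - w)⁻¹ = (Dᵀ - z)⁻¹ - (Dᵀ - w)⁻¹` then show that
`ξ(z, w) = P(z) Q(w) - P(w) Q(z)` for two scalar functions `P`, `Q`: every `ξ` is a `2 × 2` minor
of one `2 × ∞` matrix, and such minors satisfy the three-term Plücker relation identically.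
-/

open Matrix BigOperators

/-- `ξ(z,w) = (z − w)·det(F·(Dᵀ − z·I)⁻¹·(Dᵀ − w·I)⁻¹·A·(B − z·I)·(B − w·I)·Cᵀ)`. -/
noncomputable def xiGK {l n N : ℕ} (A : Matrix (Fin n) (Fin N) ℂ)
    (B : Matrix (Fin N) (Fin N) ℂ) (D : Matrix (Fin n) (Fin n) ℂ)
    (F : Matrix (Fin l) (Fin n) ℂ) (C : Matrix (Fin l) (Fin N) ℂ) (z w : ℂ) : ℂ :=
  (z - w) *
    (F * (Dᵀ - z • (1 : Matrix (Fin n) (Fin n) ℂ))⁻¹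
      * (Dᵀ - w • (1 : Matrix (Fin n) (Fin n) ℂ))⁻¹ * A
      * (B - z • (1 : Matrix (Fin N) (Fin N) ℂ))
      * (B - w • (1 : Matrix (Fin N) (Fin N) ℂ)) * Cᵀ).det

namespace Matrix

variable {K : Type*} [CommRing K] {m : Type*} [Fintype m] [DecidableEq m]

theorem det_add_vecMulVec_add_vecMulVec {T : Matrix m m K} (hT : IsUnit T.det)
    (x₁ x₂ y₁ y₂ : m → K) :
    (T + vecMulVec x₁ y₁ + vecMulVec x₂ y₂).det
      = T.det * ((1 + y₁ ⬝ᵥ T⁻¹ *ᵥ x₁) * (1 + y₂ ⬝ᵥ T⁻¹ *ᵥ x₂)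
        - (y₁ ⬝ᵥ T⁻¹ *ᵥ x₂) * (y₂ ⬝ᵥ T⁻¹ *ᵥ x₁)) := by
  have hsum : vecMulVec x₁ y₁ + vecMulVec x₂ y₂ = (of ![x₁, x₂])ᵀ * of ![y₁, y₂] := by
    ext i j
    simp [mul_apply, Fin.sum_univ_two, vecMulVec_apply]
  rw [add_assoc, hsum, det_add_mul _ _ hT, det_fin_two]
  simp [dotProduct_mulVec, vecMul_transpose, dotProduct_comm]

variable {n : Type*} [Fintype n] [DecidableEq n]

theorem inv_sub_smul_one_sub_inv_sub_smul_one {X : Matrix n n K} {z w : K}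
    (hz : IsUnit (X - z • 1).det) (hw : IsUnit (X - w • 1).det) :
    (X - z • 1)⁻¹ - (X - w • 1)⁻¹ = (z - w) • ((X - z • 1)⁻¹ * (X - w • 1)⁻¹) := by
  rw [inv_sub_inv (by simp_all [isUnit_iff_isUnit_det]), sub_sub_sub_cancel_left, ← sub_smul,
    Matrix.mul_smul, Matrix.mul_one, Matrix.smul_mul]

theorem commute_inv_sub_smul_one {X : Matrix n n K} (z w : K) :
    Commute (X - z • 1)⁻¹ (X - w • 1)⁻¹ := by
  simp only [nonsing_inv_eq_ringInverse]
  refine Commute.ringInverse_ringInverse ?_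
  exact ((Commute.refl X).sub_right ((Commute.one_right X).smul_right w)).sub_left
    (((Commute.one_left X).sub_right ((Commute.one_right 1).smul_right w)).smul_left z)

variable {p : Type*} [Fintype p] [DecidableEq p] {A : Matrix n p K} {B : Matrix p p K}
  {X : Matrix n n K} {R : Matrix n p K}

theorem mul_sub_smul_one_of_mul_sub_mul_eq (h : A * B - X * A = R) (t : K) :
    A * (B - t • 1) = (X - t • 1) * A + R := by
  rw [← h, Matrix.mul_sub, Matrix.sub_mul, Matrix.mul_smul, Matrix.smul_mul, Matrix.mul_one,
    Matrix.one_mul]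
  abel

theorem inv_mul_mul_sub_smul_one_of_mul_sub_mul_eq (h : A * B - X * A = R) {t : K}
    (ht : IsUnit (X - t • 1).det) :
    (X - t • 1)⁻¹ * A * (B - t • 1) = A + (X - t • 1)⁻¹ * R := by
  rw [Matrix.mul_assoc, mul_sub_smul_one_of_mul_sub_mul_eq h, Matrix.mul_add,
    nonsing_inv_mul_cancel_left _ _ ht]

theorem inv_mul_inv_mul_mul_sub_smul_one_mul_sub_smul_one (h : A * B - X * A = R) {z w : K}
    (hz : IsUnit (X - z • 1).det) (hw : IsUnit (X - w • 1).det) :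
    (X - z • 1)⁻¹ * (X - w • 1)⁻¹ * A * (B - z • 1) * (B - w • 1)
      = A + (X - w • 1)⁻¹ * R + (X - z • 1)⁻¹ * (X - w • 1)⁻¹ * R * (B - w • 1) := by
  calc _ = (X - w • 1)⁻¹ * ((X - z • 1)⁻¹ * A * (B - z • 1)) * (B - w • 1) := by
        rw [(commute_inv_sub_smul_one z w).eq]; simp only [Matrix.mul_assoc]
    _ = (X - w • 1)⁻¹ * A * (B - w • 1) + (X - w • 1)⁻¹ * (X - z • 1)⁻¹ * R * (B - w • 1) := by
        rw [inv_mul_mul_sub_smul_one_of_mul_sub_mul_eq h hz, Matrix.mul_add, Matrix.add_mul]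
        simp only [Matrix.mul_assoc]
    _ = _ := by
        rw [inv_mul_mul_sub_smul_one_of_mul_sub_mul_eq h hw, (commute_inv_sub_smul_one w z).eq]

variable {l : Type*} [Fintype l] [DecidableEq l]

theorem exists_sub_mul_det_eq_two_minor {f : n → K} {g : p → K}
    (h : A * B - X * A = vecMulVec f g) (F : Matrix l n K) (G : Matrix p l K)
    (hT : IsUnit (F * A * G).det) :
    ∃ P Q : K → K, ∀ z w : K, IsUnit (X - z • 1).det → IsUnit (X - w • 1).det →
      (z - w) * (F * (X - z • 1)⁻¹ * (X - w • 1)⁻¹ * A * (B - z • 1) * (B - w • 1) * G).det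
        = P z * Q w - P w * Q z := by
  set T := F * A * G
  let pair (y : l → K) (t : K) : K := y ⬝ᵥ T⁻¹ *ᵥ ((F * (X - t • 1)⁻¹) *ᵥ f)
  refine ⟨fun t => T.det * (t + pair (g ᵥ* (B * G)) t), fun t => 1 + pair (g ᵥ* G) t,
    fun z w hz hw => ?_⟩
  have hsplit : F * (X - z • 1)⁻¹ * (X - w • 1)⁻¹ * A * (B - z • 1) * (B - w • 1) * G
      = T + vecMulVec ((F * (X - w • 1)⁻¹) *ᵥ f) (g ᵥ* G)
        + vecMulVec ((F * ((X - z • 1)⁻¹ * (X - w • 1)⁻¹)) *ᵥ f)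
            (g ᵥ* (B * G) - w • (g ᵥ* G)) := by
    simp only [Matrix.mul_assoc F]
    rw [inv_mul_inv_mul_mul_sub_smul_one_mul_sub_smul_one h hz hw]
    simp only [Matrix.mul_add, Matrix.add_mul, ← Matrix.mul_assoc, mul_vecMulVec, vecMulVec_mul,
      Matrix.mul_sub, Matrix.mul_smul, Matrix.mul_one, Matrix.sub_mul, Matrix.smul_mul,
      mulVec_mulVec, vecMul_vecMul, vecMulVec_sub, vecMulVec_smul]
    rfl
  have hresolvent : ∀ y, (z - w) * (y ⬝ᵥ T⁻¹ *ᵥ ((F * ((X - z • 1)⁻¹ * (X - w • 1)⁻¹)) *ᵥ f))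
      = pair y z - pair y w := by
    intro y
    simp only [pair, ← dotProduct_sub, ← mulVec_sub, ← sub_mulVec, ← Matrix.mul_sub,
      inv_sub_smul_one_sub_inv_sub_smul_one hz hw, Matrix.mul_smul, smul_mulVec, mulVec_smul,
      dotProduct_smul, smul_eq_mul]
  rw [hsplit, det_add_vecMulVec_add_vecMulVec hT]
  simp only [pair, sub_dotProduct, smul_dotProduct, smul_eq_mul]
  linear_combination T.det * (1 + pair (g ᵥ* G) w) * hresolvent (g ᵥ* (B * G))
    - T.det * (w + pair (g ᵥ* (B * G)) w) * hresolvent (g ᵥ* G)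

end Matrix

/-- If `A·B − Dᵀ·A = f·gᵀ` and `det(F·A·Cᵀ) ≠ 0`, then for all
`z₁, z₂, z₃, z₄` with each `Dᵀ − zᵢ·I_n` invertible, the Plücker relation
`ξ(z₁,z₂)·ξ(z₃,z₄) − ξ(z₁,z₃)·ξ(z₂,z₄) + ξ(z₁,z₄)·ξ(z₂,z₃) = 0` holds. -/
theorem stmt19 (l n N : ℕ) (A : Matrix (Fin n) (Fin N) ℂ)
    (B : Matrix (Fin N) (Fin N) ℂ) (D : Matrix (Fin n) (Fin n) ℂ)
    (f : Fin n → ℂ) (g : Fin N → ℂ)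
    (hrank : A * B - Dᵀ * A = Matrix.vecMulVec f g)
    (F : Matrix (Fin l) (Fin n) ℂ) (C : Matrix (Fin l) (Fin N) ℂ)
    (hτ : (F * A * Cᵀ).det ≠ 0)
    (z₁ z₂ z₃ z₄ : ℂ)
    (h₁ : IsUnit (Dᵀ - z₁ • (1 : Matrix (Fin n) (Fin n) ℂ)))
    (h₂ : IsUnit (Dᵀ - z₂ • (1 : Matrix (Fin n) (Fin n) ℂ)))
    (h₃ : IsUnit (Dᵀ - z₃ • (1 : Matrix (Fin n) (Fin n) ℂ)))
    (h₄ : IsUnit (Dᵀ - z₄ • (1 : Matrix (Fin n) (Fin n) ℂ))) :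
    xiGK A B D F C z₁ z₂ * xiGK A B D F C z₃ z₄
      - xiGK A B D F C z₁ z₃ * xiGK A B D F C z₂ z₄
      + xiGK A B D F C z₁ z₄ * xiGK A B D F C z₂ z₃ = 0 := by
  obtain ⟨P, Q, hPQ⟩ := exists_sub_mul_det_eq_two_minor hrank F Cᵀ (isUnit_iff_ne_zero.mpr hτ)
  have hξ {z w : ℂ} (hz : IsUnit (Dᵀ - z • (1 : Matrix (Fin n) (Fin n) ℂ)))
      (hw : IsUnit (Dᵀ - w • (1 : Matrix (Fin n) (Fin n) ℂ))) :
      xiGK A B D F C z w = P z * Q w - P w * Q z :=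
    hPQ z w ((isUnit_iff_isUnit_det _).mp hz) ((isUnit_iff_isUnit_det _).mp hw)
  rw [hξ h₁ h₂, hξ h₃ h₄, hξ h₁ h₃, hξ h₂ h₄, hξ h₁ h₄, hξ h₂ h₃]
  ring
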